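/- Let 0 → A₁ → A₂ → A₃ → 0 be a short exact sequence where A₁ is a Serre subcategory of the abelian category A₂ with quotient A₃ (localization of abelian categories). Then the induced sequence of Grothendieck groups K₀(A₁) → K₀(A₂) → K₀(A₃) → 0 is exact. -/

import Mathlib

open CategoryTheory Limits

/-- The Grothendieck group `K₀` of an abelian category: the free abelian group on
objects modulo the relation `[X₂] = [X₁] + [X₃]` for each short exact sequence
`0 → X₁ → X₂ → X₃ → 0`. -/
def K0 (A : Type*) [Category A] [Abelian A] :=
  FreeAbelianGroup A ⧸ AddSubgroup.closure
    {x | ∃ S : ShortComplex A, S.ShortExact ∧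
      x = FreeAbelianGroup.of S.X₂ - FreeAbelianGroup.of S.X₁ - FreeAbelianGroup.of S.X₃}

instance (A : Type*) [Category A] [Abelian A] : AddCommGroup (K0 A) :=
  QuotientAddGroup.Quotient.addCommGroup _

/-- The class of an object in `K₀`. -/
def K0.mk {A : Type*} [Category A] [Abelian A] (X : A) : K0 A :=
  QuotientAddGroup.mk (FreeAbelianGroup.of X)

/-- `K₀` of a Serre subcategory, given by a predicate `P` on objects of an ambient
abelian category: free abelian group on objects satisfying `P`, modulo relations
coming from short exact sequences of the ambient category all of whose terms
satisfy `P`. -/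
def K0Sub {A : Type*} [Category A] [Abelian A] (P : A → Prop) :=
  FreeAbelianGroup {X : A // P X} ⧸ AddSubgroup.closure
    {x | ∃ (S : ShortComplex A) (h₁ : P S.X₁) (h₂ : P S.X₂) (h₃ : P S.X₃),
      S.ShortExact ∧
      x = FreeAbelianGroup.of (⟨S.X₂, h₂⟩ : {X : A // P X})
        - FreeAbelianGroup.of ⟨S.X₁, h₁⟩ - FreeAbelianGroup.of ⟨S.X₃, h₃⟩}

instance {A : Type*} [Category A] [Abelian A] (P : A → Prop) : AddCommGroup (K0Sub P) :=
  QuotientAddGroup.Quotient.addCommGroup _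

/-- The class of an object satisfying `P` in `K₀` of the Serre subcategory. -/
def K0Sub.mk {A : Type*} [Category A] [Abelian A] {P : A → Prop} (X : A) (hX : P X) :
    K0Sub P :=
  QuotientAddGroup.mk (FreeAbelianGroup.of ⟨X, hX⟩)

/-- The class of morphisms of the ambient abelian category whose kernel and cokernel
lie in the Serre subcategory determined by `P`; the Serre quotient is the
localization at this class. -/
def serreW {A : Type*} [Category A] [Abelian A] (P : A → Prop) : MorphismProperty A :=
  fun _ _ f => P (kernel f) ∧ P (cokernel f)

/-!
Surjectivity holds because the localization functor `q` is essentially surjective. For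
exactness in the middle, let `N ≤ K₀(A₂)` be generated by the classes of objects of `A₁`; it
suffices to build `r : K₀(A₃) → K₀(A₂) ⧸ N` with `r [q X] = [X]`. Put `r [Y] = [X]` for any `X`
with `q X ≅ Y`. This is well defined: by the calculus of left fractions such an isomorphism
`q X ≅ q X'` is represented by a roof `X → Y' ← X'` of morphisms with kernel and cokernel in
`A₁`, and `[U] - [V] = [ker a] - [coker a]` for every `a : U ⟶ V`. It is additive because,
up to isomorphism of its terms, every short exact sequence of `A₃` is the image of one in `A₂`:
a monomorphism of `A₃` is isomorphic to the image of a monomorphism `f` of `A₂`, and `q`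
preserves the cokernel of `f`.
-/

open ZeroObject

lemma QuotientAddGroup.closure_range_mk_of {α : Type*} (N : AddSubgroup (FreeAbelianGroup α)) :
    AddSubgroup.closure
      (Set.range fun a ↦ (QuotientAddGroup.mk (FreeAbelianGroup.of a) : FreeAbelianGroup α ⧸ N)) =
      ⊤ := by
  rw [eq_top_iff]
  rintro x -
  induction x using QuotientAddGroup.induction_on with | H w => ?_
  induction w using FreeAbelianGroup.induction_on with
  | zero => exact zero_mem _
  | of a => exact AddSubgroup.subset_closure ⟨a, rfl⟩
  | neg a ha => exact neg_mem ha
  | add a b ha hb => exact add_mem ha hb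

namespace K0

variable {A : Type*} [Category A] [Abelian A]

lemma closure_range_mk : AddSubgroup.closure (Set.range (K0.mk (A := A))) = ⊤ :=
  QuotientAddGroup.closure_range_mk_of _

lemma hom_ext {G : Type*} [AddCommGroup G] {φ ψ : K0 A →+ G}
    (h : ∀ X : A, φ (K0.mk X) = ψ (K0.mk X)) : φ = ψ :=
  AddMonoidHom.eq_of_eqOn_dense closure_range_mk (by rintro _ ⟨X, rfl⟩; exact h X)

lemma mk_eq_add_of_shortExact {S : ShortComplex A} (hS : S.ShortExact) :
    K0.mk S.X₂ = K0.mk S.X₁ + K0.mk S.X₃ := by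
  have h : K0.mk S.X₂ - K0.mk S.X₁ - K0.mk S.X₃ = 0 :=
    (QuotientAddGroup.eq_zero_iff _).2 (AddSubgroup.subset_closure ⟨S, hS, rfl⟩)
  rw [← sub_eq_zero, ← h]
  abel

lemma mk_eq_zero_of_isZero {Z : A} (hZ : IsZero Z) : K0.mk Z = 0 := by
  have hS : (ShortComplex.mk (0 : Z ⟶ Z) (0 : Z ⟶ Z) (by simp)).ShortExact :=
    { exact := ShortComplex.exact_of_isZero_X₂ _ hZ
      mono_f := hZ.mono _
      epi_g := hZ.epi _ }
  simpa using mk_eq_add_of_shortExact hS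

lemma mk_eq_of_iso {X Y : A} (e : X ≅ Y) : K0.mk X = K0.mk Y := by
  have hS : (ShortComplex.mk e.hom (0 : Y ⟶ 0) (by simp)).ShortExact :=
    { exact := (ShortComplex.exact_iff_epi _ rfl).2 inferInstance }
  simpa [mk_eq_zero_of_isZero (isZero_zero A)] using (mk_eq_add_of_shortExact hS).symm

lemma mk_sub_mk_eq {U V : A} (a : U ⟶ V) :
    K0.mk U - K0.mk V = K0.mk (kernel a) - K0.mk (cokernel a) := by
  have hU : (ShortComplex.mk _ _ (cokernel.condition (kernel.ι a))).ShortExact :=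
    { exact := ShortComplex.exact_cokernel _ }
  have hV : (ShortComplex.mk _ _ (kernel.condition (cokernel.π a))).ShortExact :=
    { exact := ShortComplex.exact_kernel _ }
  rw [mk_eq_add_of_shortExact hU, mk_eq_add_of_shortExact hV,
    mk_eq_of_iso (Abelian.coimageIsoImage a)]
  abel

def lift {G : Type*} [AddCommGroup G] (φ : A → G)
    (hφ : ∀ S : ShortComplex A, S.ShortExact → φ S.X₂ = φ S.X₁ + φ S.X₃) : K0 A →+ G :=
  QuotientAddGroup.lift _ (FreeAbelianGroup.lift φ) <| (AddSubgroup.closure_le _).2 <| by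
    rintro _ ⟨S, hS, rfl⟩
    simp [hφ S hS]

@[simp]
lemma lift_mk {G : Type*} [AddCommGroup G] (φ : A → G)
    (hφ : ∀ S : ShortComplex A, S.ShortExact → φ S.X₂ = φ S.X₁ + φ S.X₃) (X : A) :
    lift φ hφ (K0.mk X) = φ X :=
  FreeAbelianGroup.lift_apply_of _ _

def span (P : ObjectProperty A) : AddSubgroup (K0 A) :=
  AddSubgroup.closure {x | ∃ X, P X ∧ K0.mk X = x}

lemma mk_mem_span {P : ObjectProperty A} {X : A} (hX : P X) : K0.mk X ∈ span P :=
  AddSubgroup.subset_closure ⟨X, hX, rfl⟩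

lemma span_eq_bot_iff {P : ObjectProperty A} : span P = ⊥ ↔ ∀ X, P X → K0.mk X = 0 := by
  simp [span, AddSubgroup.closure_eq_bot_iff, Set.subset_def]

lemma range_eq_span {P : ObjectProperty A} (f : K0Sub P →+ K0 A)
    (hf : ∀ (X : A) (hX : P X), f (K0Sub.mk X hX) = K0.mk X) : f.range = span P := by
  have hgen : AddSubgroup.closure (Set.range fun X : {X // P X} ↦ K0Sub.mk X.1 X.2) = ⊤ :=
    QuotientAddGroup.closure_range_mk_of _
  rw [AddMonoidHom.range_eq_map, ← hgen, AddMonoidHom.map_closure, ← Set.range_comp, span]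
  congr 1
  ext x
  simp [hf]

lemma surjective_of_essSurj {B : Type*} [Category B] [Abelian B] (L : A ⥤ B) [L.EssSurj]
    (g : K0 A →+ K0 B) (hg : ∀ X : A, g (K0.mk X) = K0.mk (L.obj X)) :
    Function.Surjective g := by
  rw [← AddMonoidHom.range_eq_top, eq_top_iff, ← closure_range_mk, AddSubgroup.closure_le]
  rintro _ ⟨Y, rfl⟩
  exact ⟨K0.mk (L.objPreimage Y), by rw [hg, mk_eq_of_iso (L.objObjPreimageIso Y)]⟩

end K0

namespace K0

variable {C : Type*} [Category C] [Abelian C] {D : Type*} [Category D] [Abelian D]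
  (P : ObjectProperty C) [P.IsSerreClass]

lemma mk_sub_mk_mem_span_of_isoModSerre {U V : C} {a : U ⟶ V} (ha : P.isoModSerre a) :
    K0.mk U - K0.mk V ∈ span P := by
  rw [mk_sub_mk_eq]
  exact sub_mem (mk_mem_span ha.1) (mk_mem_span ha.2)

variable (L : C ⥤ D) [L.IsLocalization P.isoModSerre] [L.Additive]

open ObjectProperty.SerreClassLocalization

include L in
lemma mk_eq_mk_of_iso_map {X X' : C} (e : L.obj X ≅ L.obj X') :
    (K0.mk X : K0 C ⧸ span P) = K0.mk X' := by
  obtain ⟨φ, hφ⟩ := Localization.exists_leftFraction L P.isoModSerre e.hom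
  have : IsIso (L.map φ.s) := Localization.inverts L P.isoModSerre _ φ.hs
  have hf : IsIso (L.map φ.f) := by
    rw [← φ.map_comp_map_s L (Localization.inverts L _), ← hφ]
    infer_instance
  refine QuotientAddGroup.eq_iff_sub_mem.2 ?_
  simpa using sub_mem
    (mk_sub_mk_mem_span_of_isoModSerre P ((isIso_map_iff L P φ.f).1 hf))
    (mk_sub_mk_mem_span_of_isoModSerre P φ.hs)

include P in
lemma exists_shortExact_iso_map (T : ShortComplex D) (hT : T.ShortExact) :
    ∃ S : ShortComplex C, S.ShortExact ∧ Nonempty (L.obj S.X₁ ≅ T.X₁) ∧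
      Nonempty (L.obj S.X₂ ≅ T.X₂) ∧ Nonempty (L.obj S.X₃ ≅ T.X₃) := by
  have := hT.mono_f
  obtain ⟨X₁, X₂, f, _, ⟨e⟩⟩ := (mono_iff L P T.f).1 inferInstance
  have := preservesFiniteLimits L P
  have := preservesFiniteColimits L P
  have hS : (ShortComplex.mk f (cokernel.π f) (cokernel.condition f)).ShortExact :=
    { exact := ShortComplex.exact_cokernel f }
  exact ⟨_, hS, ⟨Arrow.leftFunc.mapIso e⟩, ⟨Arrow.rightFunc.mapIso e⟩,
    ⟨CokernelCofork.mapIsoOfIsColimit (hS.map_of_exact L).gIsCokernel hT.gIsCokernel e⟩⟩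

noncomputable def toQuotientSpan : K0 D →+ K0 C ⧸ span P :=
  haveI := Localization.essSurj L P.isoModSerre
  lift (fun Y ↦ K0.mk (L.objPreimage Y)) fun T hT ↦ by
    obtain ⟨S, hS, ⟨e₁⟩, ⟨e₂⟩, ⟨e₃⟩⟩ := exists_shortExact_iso_map P L T hT
    rw [← mk_eq_mk_of_iso_map P L (e₁ ≪≫ (L.objObjPreimageIso _).symm),
      ← mk_eq_mk_of_iso_map P L (e₂ ≪≫ (L.objObjPreimageIso _).symm),
      ← mk_eq_mk_of_iso_map P L (e₃ ≪≫ (L.objObjPreimageIso _).symm),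
      mk_eq_add_of_shortExact hS, QuotientAddGroup.mk_add]

lemma toQuotientSpan_mk_obj (X : C) :
    toQuotientSpan P L (K0.mk (L.obj X)) = (K0.mk X : K0 C ⧸ span P) := by
  have := Localization.essSurj L P.isoModSerre
  exact (lift_mk _ _ _).trans (mk_eq_mk_of_iso_map P L (L.objObjPreimageIso _))

theorem ker_eq_span (g : K0 C →+ K0 D) (hg : ∀ X : C, g (K0.mk X) = K0.mk (L.obj X)) :
    g.ker = span P := by
  refine le_antisymm (fun x hx ↦ ?_) ((AddSubgroup.closure_le _).2 ?_)
  · have hcomp : (toQuotientSpan P L).comp g = QuotientAddGroup.mk' (span P) :=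
      hom_ext fun X ↦ by simp [hg, toQuotientSpan_mk_obj]
    rw [← QuotientAddGroup.eq_zero_iff, ← QuotientAddGroup.mk'_apply, ← hcomp]
    simp [(AddMonoidHom.mem_ker).1 hx]
  · rintro _ ⟨X, hX, rfl⟩
    rw [SetLike.mem_coe, AddMonoidHom.mem_ker, hg]
    exact mk_eq_zero_of_isZero ((isZero_obj_iff L P X).2 hX)

end K0

lemma CategoryTheory.Functor.IsLocalization.of_le {C D : Type*} [Category C] [Category D]
    (L : C ⥤ D) {W W' : MorphismProperty C} [L.IsLocalization W] (hle : W ≤ W')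
    (hW' : W'.IsInvertedBy L) : L.IsLocalization W' :=
  of_equivalence_source L W L W' (Equivalence.refl)
    (fun _ _ f hf ↦ W'.le_isoClosure _ (hle f hf)) hW' L.leftUnitor

lemma CategoryTheory.ObjectProperty.isSerreClass_of {A : Type*} [Category A] [Abelian A]
    (P : ObjectProperty A)
    (hsub : ∀ (X Y : A) (f : X ⟶ Y), Mono f → P Y → P X)
    (hquot : ∀ (X Y : A) (f : X ⟶ Y), Epi f → P X → P Y)
    (hext : ∀ S : ShortComplex A, S.ShortExact → P S.X₁ → P S.X₃ → P S.X₂) (h0 : P 0) :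
    P.IsSerreClass where
  exists_zero := ⟨0, isZero_zero A, h0⟩
  prop_of_mono f _ hY := hsub _ _ f ‹_› hY
  prop_of_epi f _ hX := hquot _ _ f ‹_› hX
  prop_X₂_of_shortExact hS h₁ h₃ := hext _ hS h₁ h₃

/-- `serreW P` is `P.isoModSerre` only when `P 0` holds; otherwise `P` is empty and the
localization is also one at the isomorphisms, i.e. the Serre quotient by the zero objects. -/
lemma exists_isSerreClass_isLocalization {A B : Type*} [Category A] [Abelian A]
    [Category B] (P : A → Prop)
    (hsub : ∀ (X Y : A) (f : X ⟶ Y), Mono f → P Y → P X)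
    (hquot : ∀ (X Y : A) (f : X ⟶ Y), Epi f → P X → P Y)
    (hext : ∀ S : ShortComplex A, S.ShortExact → P S.X₁ → P S.X₃ → P S.X₂)
    (L : A ⥤ B) [L.IsLocalization (serreW P)] :
    ∃ (Q : ObjectProperty A) (_ : Q.IsSerreClass), L.IsLocalization Q.isoModSerre ∧
      K0.span Q = K0.span P := by
  by_cases h0 : P 0
  · exact ⟨P, ObjectProperty.isSerreClass_of P hsub hquot hext h0, ‹_›, rfl⟩
  have hP : ∀ X, ¬ P X := fun X hX ↦ h0 (hsub 0 X 0 inferInstance hX)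
  have hle : serreW P ≤ ObjectProperty.isoModSerre (IsZero (C := A)) :=
    fun _ _ _ hf ↦ (hP _ hf.1).elim
  refine ⟨IsZero, inferInstance, Functor.IsLocalization.of_le L hle fun _ _ f hf ↦ ?_, ?_⟩
  · have := Preadditive.mono_of_isZero_kernel f hf.1
    have := Preadditive.epi_of_isZero_cokernel f hf.2
    have := isIso_of_mono_of_epi f
    exact inferInstanceAs (IsIso (L.map f))
  · rw [K0.span_eq_bot_iff.2 fun X hX ↦ K0.mk_eq_zero_of_isZero hX,
      K0.span_eq_bot_iff.2 fun X hX ↦ (hP X hX).elim]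

theorem K0_exact_of_serre_quotient_general
    {A₂ : Type u} [Category.{v} A₂] [Abelian A₂]
    {A₃ : Type u'} [Category.{v'} A₃] [Abelian A₃]
    (P : A₂ → Prop)
    -- `P` cuts out a Serre subcategory: closed under subobjects, quotients, extensions
    (hsub : ∀ (X Y : A₂) (f : X ⟶ Y), Mono f → P Y → P X)
    (hquot : ∀ (X Y : A₂) (f : X ⟶ Y), Epi f → P X → P Y)
    (hext : ∀ S : ShortComplex A₂, S.ShortExact → P S.X₁ → P S.X₃ → P S.X₂)
    -- `q` is the Serre quotient functor: an exact localization at `serreW P`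
    (q : A₂ ⥤ A₃) [q.Additive]
    (hloc : q.IsLocalization (serreW P))
    -- the induced maps on Grothendieck groups
    (f : K0Sub P →+ K0 A₂) (hf : ∀ (X : A₂) (hX : P X), f (K0Sub.mk X hX) = K0.mk X)
    (g : K0 A₂ →+ K0 A₃) (hg : ∀ X : A₂, g (K0.mk X) = K0.mk (q.obj X)) :
    Function.Surjective g ∧ Function.Exact f g := by
  obtain ⟨Q, _, _, hspan⟩ := exists_isSerreClass_isLocalization P hsub hquot hext q
  have := Localization.essSurj q Q.isoModSerre
  refine ⟨K0.surjective_of_essSurj q g hg, fun y ↦ ?_⟩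
  rw [← AddMonoidHom.mem_ker, K0.ker_eq_span Q q g hg, hspan, ← K0.range_eq_span f hf]
  rfl

/-- for a Serre subcategory `A₁ ⊆ A₂` (given by a predicate `P`) with
Serre quotient `q : A₂ ⥤ A₃`, the induced sequence of Grothendieck groups
`K₀(A₁) → K₀(A₂) → K₀(A₃) → 0` is exact. -/
theorem K0_exact_of_serre_quotient
    {A₂ : Type u} [Category.{v} A₂] [Abelian A₂]
    {A₃ : Type u'} [Category.{v'} A₃] [Abelian A₃]
    (P : A₂ → Prop)
    -- `P` cuts out a Serre subcategory: closed under subobjects, quotients, extensions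
    (hsub : ∀ (X Y : A₂) (f : X ⟶ Y), Mono f → P Y → P X)
    (hquot : ∀ (X Y : A₂) (f : X ⟶ Y), Epi f → P X → P Y)
    (hext : ∀ S : ShortComplex A₂, S.ShortExact → P S.X₁ → P S.X₃ → P S.X₂)
    -- `q` is the Serre quotient functor: an exact localization at `serreW P`
    (q : A₂ ⥤ A₃) [q.Additive] [PreservesFiniteLimits q] [PreservesFiniteColimits q]
    (hloc : q.IsLocalization (serreW P))
    -- the induced maps on Grothendieck groups
    (f : K0Sub P →+ K0 A₂) (hf : ∀ (X : A₂) (hX : P X), f (K0Sub.mk X hX) = K0.mk X)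
    (g : K0 A₂ →+ K0 A₃) (hg : ∀ X : A₂, g (K0.mk X) = K0.mk (q.obj X)) :
    Function.Surjective g ∧ Function.Exact f g :=
  K0_exact_of_serre_quotient_general P hsub hquot hext q hloc f hf g hg
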